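/- arXiv:math/0103128 — 4 statements merged into one kernel-verified Lean document; each statement's English description precedes it below -/
import Mathlib

section
/- For all nonnegative integers M, N, all indices 1 ≤ i, j ≤ M+N+1, and all z ∈ ℂ, the signed pairing of the oscillator coefficient vectors satisfies B(γ_i(z), γ_j(z)) · sinh(z) = sinh(A_{ij} · z), where A is the Cartan matrix of sl(M+1|N+1). (This is the scalar content of the commutation relation [λ̂_i(t), λ̂_j(t')] = (1/((iħ)²t)) sinh(i a_{ij} ħ t) sinh(i ħ t) δ(t+t') for the composite bosonic oscillators λ̂_i built from the elementary oscillators â_k, b̂_l.) -/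
lemma sum_single {n : ℕ} (a : ℕ) (ha : a < n) (x : ℂ) (f : Fin n → ℂ) :
    (∑ k : Fin n, (if (k : ℕ) = a then x else 0) * f k) = x * f ⟨a, ha⟩ := by
  rw [Finset.sum_eq_single (⟨a, ha⟩ : Fin n)]
  · simp
  · intro b _ hb
    rw [if_neg (by simpa [Fin.ext_iff] using hb), zero_mul]
  · simp

lemma sum_double {n : ℕ} (a b : ℕ) (ha : a < n) (hb : b < n) (hab : a ≠ b) (x y : ℂ)
    (f : Fin n → ℂ) :
    (∑ k : Fin n, (if (k : ℕ) = a then x else if (k : ℕ) = b then y else 0) * f k)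
      = x * f ⟨a, ha⟩ + y * f ⟨b, hb⟩ := by
  have h : ∀ k : Fin n,
      (if (k : ℕ) = a then x else if (k : ℕ) = b then y else 0) * f k
        = (if (k : ℕ) = a then x else 0) * f k + (if (k : ℕ) = b then y else 0) * f k := by
    intro k
    by_cases h1 : (k : ℕ) = a
    · rw [if_pos h1, if_pos h1, if_neg (by omega), zero_mul, add_zero]
    · rw [if_neg h1, if_neg h1, zero_mul, zero_add]
  rw [Finset.sum_congr rfl (fun k _ => h k), Finset.sum_add_distrib,
    sum_single a ha, sum_single b hb]

lemma exp_half_sq (z : ℂ) : Complex.exp (z / 2) * Complex.exp (z / 2) = Complex.exp z := by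
  rw [← Complex.exp_add]; congr 1; ring

lemma exp_neg_half_sq (z : ℂ) :
    Complex.exp (-(z / 2)) * Complex.exp (-(z / 2)) = Complex.exp (-z) := by
  rw [← Complex.exp_add]; congr 1; ring

lemma exp_half_cancel (z : ℂ) : Complex.exp (z / 2) * Complex.exp (-(z / 2)) = 1 := by
  rw [← Complex.exp_add, ← Complex.exp_zero]; congr 1; ring

lemma exp_half_cancel' (z : ℂ) : Complex.exp (-(z / 2)) * Complex.exp (z / 2) = 1 := by
  rw [mul_comm]; exact exp_half_cancel z

lemma mul_sinh_two (z : ℂ) :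
    (Complex.exp z + Complex.exp (-z)) * Complex.sinh z = Complex.sinh (2 * z) := by
  have h1 : Complex.exp (2 * z) = Complex.exp z * Complex.exp z := by
    rw [← Complex.exp_add]; congr 1; ring
  have h2 : Complex.exp (-(2 * z)) = Complex.exp (-z) * Complex.exp (-z) := by
    rw [← Complex.exp_add]; congr 1; ring
  simp only [Complex.sinh, h1, h2]; ring

lemma neg_mul_sinh_two (z : ℂ) :
    (-(Complex.exp z + Complex.exp (-z))) * Complex.sinh z = Complex.sinh (-(2 * z)) := by
  rw [Complex.sinh_neg, ← mul_sinh_two]; ring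



/-- The Cartan matrix of `sl(M+1|N+1)`, with rows/columns indexed by
`Fin (M+N+1)` (the index `i : Fin (M+N+1)` corresponds to the 1-based index `i.val + 1`). -/
def slCartan (M N : ℕ) (i j : Fin (M + N + 1)) : ℤ :=
  if i = j then
    (if i.val < M then 2 else if i.val = M then 0 else -2)
  else if j.val = i.val + 1 ∨ i.val = j.val + 1 then
    (if min i.val j.val < M then -1 else 1)
  else 0

/-- The signed bilinear pairing on `ℂ^{M+1} × ℂ^{N+1}`:
`B(e_{a_i}, e_{a_j}) = δ_{ij}`, `B(e_{b_i}, e_{b_j}) = -δ_{ij}`, `B(e_{a_i}, e_{b_j}) = 0`. -/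
noncomputable def signedPairing (M N : ℕ)
    (v w : (Fin (M + 1) → ℂ) × (Fin (N + 1) → ℂ)) : ℂ :=
  (∑ k, v.1 k * w.1 k) - (∑ l, v.2 l * w.2 l)

/-- The coefficient vector `γ_i(z)` of the composite oscillator `λ̂_i`, built from the
elementary oscillators: `γ_i(z) = e^{z/2} e_{a_i} - e^{-z/2} e_{a_{i+1}}` for `1 ≤ i ≤ M`,
`γ_{M+1}(z) = e^{z/2}(e_{a_{M+1}} + e_{b_1})`, and
`γ_{M+1+j}(z) = -e^{-z/2} e_{b_j} + e^{z/2} e_{b_{j+1}}` for `1 ≤ j ≤ N`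
(all indices in this docstring are 1-based; `i : Fin (M+N+1)` corresponds to `i.val + 1`). -/
noncomputable def gammaVec (M N : ℕ) (z : ℂ) (i : Fin (M + N + 1)) :
    (Fin (M + 1) → ℂ) × (Fin (N + 1) → ℂ) :=
  if i.val < M then
    (fun k => if k.val = i.val then Complex.exp (z / 2)
              else if k.val = i.val + 1 then -Complex.exp (-(z / 2)) else 0,
     0)
  else if i.val = M then
    (fun k => if k.val = M then Complex.exp (z / 2) else 0,
     fun l => if l.val = 0 then Complex.exp (z / 2) else 0)
  else
    (0,
     fun l => if l.val = i.val - M - 1 then -Complex.exp (-(z / 2))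
              else if l.val = i.val - M then Complex.exp (z / 2) else 0)

/-- The scalar content of the commutation relation
`[λ̂_i(t), λ̂_j(t')] = (1/((iħ)²t)) sinh(i a_{ij} ħ t) sinh(i ħ t) δ(t+t')`:
for all `M, N`, all indices `i, j` and all `z ∈ ℂ`,
`B(γ_i(z), γ_j(z)) · sinh z = sinh (A_{ij} · z)`. -/
theorem signedPairing_gammaVec_mul_sinh (M N : ℕ) (i j : Fin (M + N + 1)) (z : ℂ) :
    signedPairing M N (gammaVec M N z i) (gammaVec M N z j) * Complex.sinh z
      = Complex.sinh ((slCartan M N i j : ℂ) * z) := by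
  have hiLt := i.isLt
  have hjLt := j.isLt
  rcases lt_trichotomy i.val M with hi | hi | hi <;>
    rcases lt_trichotomy j.val M with hj | hj | hj
  -- case 1: i < M, j < M
  · have gi : gammaVec M N z i =
        (fun k => if k.val = i.val then Complex.exp (z / 2)
              else if k.val = i.val + 1 then -Complex.exp (-(z / 2)) else 0, 0) := by
      rw [gammaVec, if_pos hi]
    have gj : gammaVec M N z j =
        (fun k => if k.val = j.val then Complex.exp (z / 2)
              else if k.val = j.val + 1 then -Complex.exp (-(z / 2)) else 0, 0) := by
      rw [gammaVec, if_pos hj]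
    simp only [signedPairing, gi, gj, Pi.zero_apply, mul_zero, Finset.sum_const_zero, sub_zero]
    rw [sum_double i.val (i.val + 1) (by omega) (by omega) (by omega)]
    simp only
    by_cases hij : i.val = j.val
    · rw [if_pos hij, if_neg (show ¬ (i.val + 1 = j.val) by omega),
        if_pos (show i.val + 1 = j.val + 1 by omega)]
      have hA : slCartan M N i j = 2 := by
        rw [slCartan, if_pos (Fin.ext hij), if_pos hi]
      rw [neg_mul_neg, exp_half_sq, exp_neg_half_sq, hA]
      push_cast
      exact mul_sinh_two z
    · by_cases h1 : j.val = i.val + 1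
      · rw [if_neg hij, if_neg (by omega), if_pos (by omega)]
        have hA : slCartan M N i j = -1 := by
          rw [slCartan, if_neg (by simp [Fin.ext_iff]; omega), if_pos (Or.inl h1),
            if_pos (by omega)]
        rw [mul_zero, zero_add, neg_mul, exp_half_cancel', hA]
        push_cast
        rw [neg_one_mul, neg_one_mul, Complex.sinh_neg]
      · by_cases h2 : i.val = j.val + 1
        · rw [if_neg hij, if_pos h2, if_neg (by omega), if_neg (by omega)]
          have hA : slCartan M N i j = -1 := by
            rw [slCartan, if_neg (by simp [Fin.ext_iff]; omega), if_pos (Or.inr h2),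
              if_pos (by omega)]
          rw [mul_neg, exp_half_cancel, mul_zero, add_zero, hA]
          push_cast
          rw [neg_one_mul, neg_one_mul, Complex.sinh_neg]
        · rw [if_neg hij, if_neg (by omega), if_neg (by omega), if_neg (by omega)]
          have hA : slCartan M N i j = 0 := by
            rw [slCartan, if_neg (by simp [Fin.ext_iff]; omega), if_neg (by omega)]
          rw [mul_zero, mul_zero, add_zero, hA]
          push_cast
          simp
  -- case 2: i < M, j = M
  · have gi : gammaVec M N z i =
        (fun k => if k.val = i.val then Complex.exp (z / 2)
              else if k.val = i.val + 1 then -Complex.exp (-(z / 2)) else 0, 0) := by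
      rw [gammaVec, if_pos hi]
    have gj : gammaVec M N z j =
        (fun k => if k.val = M then Complex.exp (z / 2) else 0,
         fun l => if l.val = 0 then Complex.exp (z / 2) else 0) := by
      rw [gammaVec, if_neg (by omega), if_pos hj]
    simp only [signedPairing, gi, gj, Pi.zero_apply, zero_mul, Finset.sum_const_zero, sub_zero]
    rw [sum_double i.val (i.val + 1) (by omega) (by omega) (by omega)]
    simp only
    rw [if_neg (show ¬ (i.val = M) by omega)]
    by_cases h1 : i.val + 1 = M
    · rw [if_pos h1]
      have hA : slCartan M N i j = -1 := by
        rw [slCartan, if_neg (by simp [Fin.ext_iff]; omega), if_pos (Or.inl (by omega)),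
          if_pos (by omega)]
      rw [mul_zero, zero_add, neg_mul, exp_half_cancel', hA]
      push_cast
      rw [neg_one_mul, neg_one_mul, Complex.sinh_neg]
    · rw [if_neg h1]
      have hA : slCartan M N i j = 0 := by
        rw [slCartan, if_neg (by simp [Fin.ext_iff]; omega), if_neg (by omega)]
      rw [mul_zero, mul_zero, add_zero, hA]
      push_cast
      simp
  -- case 3: i < M, M < j
  · have gi : gammaVec M N z i =
        (fun k => if k.val = i.val then Complex.exp (z / 2)
              else if k.val = i.val + 1 then -Complex.exp (-(z / 2)) else 0, 0) := by
      rw [gammaVec, if_pos hi]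
    have gj : gammaVec M N z j =
        (0, fun l => if l.val = j.val - M - 1 then -Complex.exp (-(z / 2))
              else if l.val = j.val - M then Complex.exp (z / 2) else 0) := by
      rw [gammaVec, if_neg (by omega), if_neg (by omega)]
    simp only [signedPairing, gi, gj, Pi.zero_apply, zero_mul, mul_zero,
      Finset.sum_const_zero, sub_zero]
    have hA : slCartan M N i j = 0 := by
      rw [slCartan, if_neg (by simp [Fin.ext_iff]; omega), if_neg (by omega)]
    rw [hA]
    push_cast
    simp
  -- case 4: i = M, j < M
  · have gi : gammaVec M N z i =
        (fun k => if k.val = M then Complex.exp (z / 2) else 0,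
         fun l => if l.val = 0 then Complex.exp (z / 2) else 0) := by
      rw [gammaVec, if_neg (by omega), if_pos hi]
    have gj : gammaVec M N z j =
        (fun k => if k.val = j.val then Complex.exp (z / 2)
              else if k.val = j.val + 1 then -Complex.exp (-(z / 2)) else 0, 0) := by
      rw [gammaVec, if_pos hj]
    simp only [signedPairing, gi, gj, Pi.zero_apply, mul_zero, Finset.sum_const_zero, sub_zero]
    rw [sum_single M (by omega)]
    simp only
    rw [if_neg (show ¬ (M = j.val) by omega)]
    by_cases h1 : M = j.val + 1
    · rw [if_pos h1]
      have hA : slCartan M N i j = -1 := by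
        rw [slCartan, if_neg (by simp [Fin.ext_iff]; omega), if_pos (Or.inr (by omega)),
          if_pos (by omega)]
      rw [mul_neg, exp_half_cancel, hA]
      push_cast
      rw [neg_one_mul, neg_one_mul, Complex.sinh_neg]
    · rw [if_neg h1]
      have hA : slCartan M N i j = 0 := by
        rw [slCartan, if_neg (by simp [Fin.ext_iff]; omega), if_neg (by omega)]
      rw [mul_zero, hA]
      push_cast
      simp
  -- case 5: i = M, j = M
  · have gi : gammaVec M N z i =
        (fun k => if k.val = M then Complex.exp (z / 2) else 0,
         fun l => if l.val = 0 then Complex.exp (z / 2) else 0) := by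
      rw [gammaVec, if_neg (by omega), if_pos hi]
    have gj : gammaVec M N z j =
        (fun k => if k.val = M then Complex.exp (z / 2) else 0,
         fun l => if l.val = 0 then Complex.exp (z / 2) else 0) := by
      rw [gammaVec, if_neg (by omega), if_pos hj]
    simp only [signedPairing, gi, gj]
    rw [sum_single M (by omega), sum_single 0 (by omega)]
    simp only
    simp only [if_true]
    have hA : slCartan M N i j = 0 := by
      rw [slCartan, if_pos (Fin.ext (by omega)), if_neg (by omega), if_pos hi]
    rw [hA, sub_self, zero_mul]
    push_cast
    simp
  -- case 6: i = M, M < j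
  · have gi : gammaVec M N z i =
        (fun k => if k.val = M then Complex.exp (z / 2) else 0,
         fun l => if l.val = 0 then Complex.exp (z / 2) else 0) := by
      rw [gammaVec, if_neg (by omega), if_pos hi]
    have gj : gammaVec M N z j =
        (0, fun l => if l.val = j.val - M - 1 then -Complex.exp (-(z / 2))
              else if l.val = j.val - M then Complex.exp (z / 2) else 0) := by
      rw [gammaVec, if_neg (by omega), if_neg (by omega)]
    simp only [signedPairing, gi, gj, Pi.zero_apply, mul_zero, Finset.sum_const_zero, zero_sub]
    rw [sum_single 0 (by omega)]
    simp only
    by_cases h1 : (0:ℕ) = j.val - M - 1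
    · rw [if_pos h1]
      have hA : slCartan M N i j = 1 := by
        rw [slCartan, if_neg (by simp [Fin.ext_iff]; omega), if_pos (Or.inl (by omega)),
          if_neg (by omega)]
      rw [hA]
      push_cast
      simp [neg_mul, mul_neg, exp_half_cancel, exp_half_cancel', Complex.sinh_neg]
    · rw [if_neg h1, if_neg (show ¬ ((0:ℕ) = j.val - M) by omega)]
      have hA : slCartan M N i j = 0 := by
        rw [slCartan, if_neg (by simp [Fin.ext_iff]; omega), if_neg (by omega)]
      rw [hA]
      push_cast
      simp
  -- case 7: M < i, j < M
  · have gi : gammaVec M N z i =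
        (0, fun l => if l.val = i.val - M - 1 then -Complex.exp (-(z / 2))
              else if l.val = i.val - M then Complex.exp (z / 2) else 0) := by
      rw [gammaVec, if_neg (by omega), if_neg (by omega)]
    have gj : gammaVec M N z j =
        (fun k => if k.val = j.val then Complex.exp (z / 2)
              else if k.val = j.val + 1 then -Complex.exp (-(z / 2)) else 0, 0) := by
      rw [gammaVec, if_pos hj]
    simp only [signedPairing, gi, gj, Pi.zero_apply, zero_mul, mul_zero,
      Finset.sum_const_zero, sub_zero, zero_sub]
    have hA : slCartan M N i j = 0 := by
      rw [slCartan, if_neg (by simp [Fin.ext_iff]; omega), if_neg (by omega)]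
    rw [hA]
    push_cast
    simp
  -- case 8: M < i, j = M
  · have gi : gammaVec M N z i =
        (0, fun l => if l.val = i.val - M - 1 then -Complex.exp (-(z / 2))
              else if l.val = i.val - M then Complex.exp (z / 2) else 0) := by
      rw [gammaVec, if_neg (by omega), if_neg (by omega)]
    have gj : gammaVec M N z j =
        (fun k => if k.val = M then Complex.exp (z / 2) else 0,
         fun l => if l.val = 0 then Complex.exp (z / 2) else 0) := by
      rw [gammaVec, if_neg (by omega), if_pos hj]
    simp only [signedPairing, gi, gj, Pi.zero_apply, zero_mul, Finset.sum_const_zero, zero_sub]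
    rw [sum_double (i.val - M - 1) (i.val - M) (by omega) (by omega) (by omega)]
    simp only
    by_cases h1 : i.val - M - 1 = 0
    · rw [if_pos h1, if_neg (show ¬ (i.val - M = 0) by omega)]
      have hA : slCartan M N i j = 1 := by
        rw [slCartan, if_neg (by simp [Fin.ext_iff]; omega), if_pos (Or.inr (by omega)),
          if_neg (by omega)]
      rw [hA]
      push_cast
      simp [neg_mul, mul_neg, exp_half_cancel, exp_half_cancel', Complex.sinh_neg]
    · rw [if_neg h1, if_neg (show ¬ (i.val - M = 0) by omega)]
      have hA : slCartan M N i j = 0 := by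
        rw [slCartan, if_neg (by simp [Fin.ext_iff]; omega), if_neg (by omega)]
      rw [hA]
      push_cast
      simp
  -- case 9: M < i, M < j
  · have gi : gammaVec M N z i =
        (0, fun l => if l.val = i.val - M - 1 then -Complex.exp (-(z / 2))
              else if l.val = i.val - M then Complex.exp (z / 2) else 0) := by
      rw [gammaVec, if_neg (by omega), if_neg (by omega)]
    have gj : gammaVec M N z j =
        (0, fun l => if l.val = j.val - M - 1 then -Complex.exp (-(z / 2))
              else if l.val = j.val - M then Complex.exp (z / 2) else 0) := by
      rw [gammaVec, if_neg (by omega), if_neg (by omega)]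
    simp only [signedPairing, gi, gj, Pi.zero_apply, zero_mul, Finset.sum_const_zero, zero_sub]
    rw [sum_double (i.val - M - 1) (i.val - M) (by omega) (by omega) (by omega)]
    simp only
    by_cases hij : i.val = j.val
    · rw [if_pos (show i.val - M - 1 = j.val - M - 1 by omega),
        if_neg (show ¬ (i.val - M = j.val - M - 1) by omega),
        if_pos (show i.val - M = j.val - M by omega)]
      have hA : slCartan M N i j = -2 := by
        rw [slCartan, if_pos (Fin.ext hij), if_neg (by omega), if_neg (by omega)]
      rw [neg_mul_neg, exp_neg_half_sq, exp_half_sq, hA]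
      push_cast
      rw [show ((-2 : ℂ)) * z = -(2 * z) by ring,
        show (-(Complex.exp (-z) + Complex.exp z)) = -(Complex.exp z + Complex.exp (-z))
          by ring]
      exact neg_mul_sinh_two z
    · by_cases h1 : j.val = i.val + 1
      · rw [if_neg (show ¬ (i.val - M - 1 = j.val - M - 1) by omega),
          if_neg (show ¬ (i.val - M - 1 = j.val - M) by omega),
          if_pos (show i.val - M = j.val - M - 1 by omega)]
        have hA : slCartan M N i j = 1 := by
          rw [slCartan, if_neg (by simp [Fin.ext_iff]; omega), if_pos (Or.inl h1),
            if_neg (by omega)]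
        rw [hA]
        push_cast
        simp [neg_mul, mul_neg, exp_half_cancel, exp_half_cancel', Complex.sinh_neg]
      · by_cases h2 : i.val = j.val + 1
        · rw [if_neg (show ¬ (i.val - M - 1 = j.val - M - 1) by omega),
            if_pos (show i.val - M - 1 = j.val - M by omega),
            if_neg (show ¬ (i.val - M = j.val - M - 1) by omega),
            if_neg (show ¬ (i.val - M = j.val - M) by omega)]
          have hA : slCartan M N i j = 1 := by
            rw [slCartan, if_neg (by simp [Fin.ext_iff]; omega), if_pos (Or.inr h2),
              if_neg (by omega)]
          rw [hA]
          push_cast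
          simp [neg_mul, mul_neg, exp_half_cancel, exp_half_cancel', Complex.sinh_neg]
        · rw [if_neg (show ¬ (i.val - M - 1 = j.val - M - 1) by omega),
            if_neg (show ¬ (i.val - M - 1 = j.val - M) by omega),
            if_neg (show ¬ (i.val - M = j.val - M - 1) by omega),
            if_neg (show ¬ (i.val - M = j.val - M) by omega)]
          have hA : slCartan M N i j = 0 := by
            rw [slCartan, if_neg (by simp [Fin.ext_iff]; omega), if_neg (by omega)]
          rw [hA]
          push_cast
          simp
end

section
/- Complex Frullani integral: for p, q ∈ ℂ with Re p > 0 and Re q > 0, the function t ↦ (exp(−p t) − exp(−q t))/t is integrable on (0, ∞) and ∫_0^∞ (exp(−p t) − exp(−q t))/t dt = Log q − Log p, where Log denotes the principal branch of the complex logarithm. (This identity produces the rational normal-ordering factors between positive- and negative-frequency vertex operators built from the continuum free bosons.) -/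
/-!
Writing `γ u = p + u (q - p)` for the segment from `p` to `q`, the fundamental theorem of calculus
in `u` gives `(e^{-pt} - e^{-qt}) / t = (q - p) ∫₀¹ e^{-γ(u) t} du`. The segment stays in the
half-plane `Re z ≥ min (Re p) (Re q) > 0`, so the double integral converges absolutely and Fubini
applies; the Laplace integral `∫₀^∞ e^{-γ(u) t} dt = γ(u)⁻¹` then leaves
`(q - p) ∫₀¹ γ(u)⁻¹ du = Log q - Log p`, again by the fundamental theorem of calculus.
-/

open MeasureTheory Set Complex intervalIntegral

lemma min_re_le_re_add_smul_sub (p q : ℂ) {u : ℝ} (hu : u ∈ Icc (0 : ℝ) 1) :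
    min p.re q.re ≤ (p + u • (q - p)).re := by
  have hre : (p + u • (q - p)).re = (1 - u) * p.re + u * q.re := by
    simp only [add_re, smul_re, sub_re, smul_eq_mul]
    ring
  rw [hre]
  nlinarith [hu.1, hu.2, min_le_left p.re q.re, min_le_right p.re q.re]

lemma integral_exp_neg_mul_Ioi {s : ℂ} (hs : 0 < s.re) :
    ∫ t : ℝ in Ioi 0, exp (-s * t) = s⁻¹ := by
  rw [integral_exp_mul_complex_Ioi (by simpa using hs)]
  simp [neg_div_neg_eq]

lemma sub_mul_integral_exp_segment (p q : ℂ) {t : ℝ} (ht : t ≠ 0) :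
    (q - p) * ∫ u in (0 : ℝ)..1, exp (-(p + u • (q - p)) * t) =
      (exp (-p * t) - exp (-q * t)) / t := by
  have ht' : (t : ℂ) ≠ 0 := ofReal_ne_zero.mpr ht
  have hderiv : ∀ z : ℂ, HasDerivAt (fun z => -exp (-z * t) / t) (exp (-z * t)) z := by
    intro z
    refine (((hasDerivAt_neg z).mul_const (t : ℂ)).cexp.neg.div_const (t : ℂ)).congr_deriv ?_
    field_simp
  have := integral_unitInterval_deriv_eq_sub (f := fun z => -exp (-z * t) / t)
    (f' := fun z => exp (-z * t)) (z₀ := p) (z₁ := q - p) (by fun_prop) fun u _ => hderiv _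
  rw [smul_eq_mul, add_sub_cancel] at this
  rw [this]
  ring

lemma sub_mul_integral_inv_segment {p q : ℂ}
    (h : ∀ u ∈ Icc (0 : ℝ) 1, p + u • (q - p) ∈ slitPlane) :
    (q - p) * ∫ u in (0 : ℝ)..1, (p + u • (q - p))⁻¹ = log q - log p := by
  have := integral_unitInterval_deriv_eq_sub (f := log) (f' := fun z => z⁻¹)
    (ContinuousOn.inv₀ (by fun_prop) fun u hu => slitPlane_ne_zero (h u hu))
    (fun u hu => hasDerivAt_log (h u hu))
  rwa [smul_eq_mul, add_sub_cancel] at this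

lemma integrable_exp_segment_prod {p q : ℂ} (hp : 0 < p.re) (hq : 0 < q.re) :
    Integrable (fun x : ℝ × ℝ => exp (-(p + x.2 • (q - p)) * x.1))
      ((volume.restrict (Ioi 0)).prod (volume.restrict (Ioc 0 1))) := by
  set m := min p.re q.re
  have hbound : Integrable (fun x : ℝ × ℝ => Real.exp (-m * x.1))
      ((volume.restrict (Ioi 0)).prod (volume.restrict (Ioc 0 1))) := by
    have h1 : Integrable (fun _ : ℝ => (1 : ℝ)) (volume.restrict (Ioc 0 1)) := by simp
    simpa using (exp_neg_integrableOn_Ioi 0 (lt_min hp hq)).integrable.mul_prod h1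
  refine hbound.mono' (by fun_prop) ?_
  rw [Measure.prod_restrict, ae_restrict_iff' (measurableSet_Ioi.prod measurableSet_Ioc)]
  filter_upwards with ⟨t, u⟩ ⟨ht, hu⟩
  rw [norm_exp, neg_mul, neg_re, re_mul_ofReal, neg_mul]
  gcongr
  · exact ht.le
  · exact min_re_le_re_add_smul_sub p q (Ioc_subset_Icc_self hu)

/-- Complex Frullani integral: for `p, q ∈ ℂ` with positive real parts, the function
`t ↦ (exp(-p t) - exp(-q t))/t` is integrable on `(0, ∞)` and its integral equals
`Log q - Log p`, with `Log` the principal complex logarithm. -/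
theorem frullani_exp_integral (p q : ℂ) (hp : 0 < p.re) (hq : 0 < q.re) :
    MeasureTheory.IntegrableOn
      (fun t : ℝ => (Complex.exp (-p * t) - Complex.exp (-q * t)) / t) (Set.Ioi 0) ∧
    ∫ t : ℝ in Set.Ioi 0, (Complex.exp (-p * t) - Complex.exp (-q * t)) / t
      = Complex.log q - Complex.log p := by
  have hre : ∀ u ∈ Icc (0 : ℝ) 1, 0 < (p + u • (q - p)).re := fun u hu =>
    (lt_min hp hq).trans_le (min_re_le_re_add_smul_sub p q hu)
  set K : ℝ → ℝ → ℂ := fun t u => exp (-(p + u • (q - p)) * t)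
  have hK : Integrable (Function.uncurry K) _ := integrable_exp_segment_prod hp hq
  have hinner : EqOn (fun t : ℝ => (exp (-p * t) - exp (-q * t)) / t)
      (fun t => (q - p) * ∫ u in Ioc 0 1, K t u) (Ioi 0) := fun t ht => by
    dsimp only
    rw [← integral_of_le zero_le_one, sub_mul_integral_exp_segment p q (ne_of_gt ht)]
  have houter : EqOn (fun u => ∫ t in Ioi 0, K t u) (fun u => (p + u • (q - p))⁻¹) (Ioc 0 1) :=
    fun u hu => integral_exp_neg_mul_Ioi (hre u (Ioc_subset_Icc_self hu))
  refine ⟨?_, ?_⟩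
  · exact (hK.integral_prod_left.const_mul (q - p)).congr
      (ae_restrict_of_forall_mem measurableSet_Ioi fun t ht => (hinner ht).symm)
  calc ∫ t : ℝ in Ioi 0, (exp (-p * t) - exp (-q * t)) / t
      = ∫ t in Ioi 0, (q - p) * ∫ u in Ioc 0 1, K t u :=
        setIntegral_congr_fun measurableSet_Ioi hinner
    _ = (q - p) * ∫ u in Ioc 0 1, ∫ t in Ioi 0, K t u := by
      rw [MeasureTheory.integral_const_mul, integral_integral_swap hK]
    _ = (q - p) * ∫ u in (0 : ℝ)..1, (p + u • (q - p))⁻¹ := by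
      rw [integral_of_le zero_le_one, setIntegral_congr_fun measurableSet_Ioc houter]
    _ = log q - log p := sub_mul_integral_inv_segment fun u hu => Or.inl (hre u hu)
end

section
/- Cosine Frullani integral with complex damping: for p ∈ ℂ with Re p > 0 and real numbers b, c, the function t ↦ (cos(b t) − cos(c t)) exp(−p t)/t is integrable on (0, ∞) and ∫_0^∞ (cos(b t) − cos(c t)) exp(−p t)/t dt = (1/2)(Log(p + i c) + Log(p − i c) − Log(p + i b) − Log(p − i b)), where Log denotes the principal branch of the complex logarithm. -/
/-!
For `Re a, Re a' > 0`, differentiating along the segment from `a` to `a'` gives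
`e^{-at} - e^{-a't} = t ∫₀¹ (a' - a) e^{-(a + u(a' - a))t} du`. On the segment the real part stays
`≥ min (Re a) (Re a')`, so the kernel is integrable on `(0, ∞) × (0, 1]` and Fubini turns the
Frullani integral into `∫₀¹ (a' - a)/(a + u(a' - a)) du = Log a' - Log a`; the segment lies in
the right half-plane, where `Log` is a holomorphic primitive of `z⁻¹`. The cosine integrand is
half the sum of two such differences, with `a = p ∓ i b` and `a' = p ∓ i c`.
-/

open MeasureTheory Set Complex

noncomputable def frullaniKernel (a a' : ℂ) (z : ℝ × ℝ) : ℂ :=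
  (a' - a) * cexp (-(a + z.2 * (a' - a)) * z.1)

section

variable {a a' : ℂ}

lemma min_re_le_re_add_mul_sub {u : ℝ} (hu : u ∈ Icc (0 : ℝ) 1) :
    min a.re a'.re ≤ (a + u * (a' - a)).re := by
  have hre : (a + u * (a' - a)).re = (1 - u) * a.re + u * a'.re := by simp; ring
  rw [hre]
  nlinarith [min_le_left a.re a'.re, min_le_right a.re a'.re, hu.1, hu.2]

lemma hasDerivAt_add_mul_sub (u : ℝ) :
    HasDerivAt (fun u : ℝ => a + u * (a' - a)) (a' - a) u := by
  simpa using ((hasDerivAt_id u).ofReal_comp.mul_const (a' - a)).const_add a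

lemma integral_mul_cexp_segment {t : ℝ} (ht : t ≠ 0) :
    ∫ u in (0 : ℝ)..1, (a' - a) * cexp (-(a + u * (a' - a)) * t)
      = (cexp (-a * t) - cexp (-a' * t)) / t := by
  have ht' : (t : ℂ) ≠ 0 := ofReal_ne_zero.mpr ht
  have hderiv : ∀ u ∈ uIcc (0 : ℝ) 1, HasDerivAt (fun u : ℝ => cexp (-(a + u * (a' - a)) * t) / -t)
      ((a' - a) * cexp (-(a + u * (a' - a)) * t)) u := fun u _ => by
    have hexp : HasDerivAt (fun u : ℝ => -(a + u * (a' - a)) * t) (-(a' - a) * t) u :=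
      (hasDerivAt_add_mul_sub u).neg.mul_const _
    refine (hexp.cexp.div_const (-t : ℂ)).congr_deriv ?_
    field_simp
  rw [intervalIntegral.integral_eq_sub_of_hasDerivAt hderiv
    (by apply Continuous.intervalIntegrable; fun_prop)]
  push_cast
  ring_nf

lemma integral_div_segment_eq_log_sub (ha : 0 < a.re) (ha' : 0 < a'.re) :
    ∫ u in (0 : ℝ)..1, (a' - a) / (a + u * (a' - a)) = log a' - log a := by
  have hre : ∀ u ∈ uIcc (0 : ℝ) 1, 0 < (a + u * (a' - a)).re := fun u hu =>
    (lt_min ha ha').trans_le (min_re_le_re_add_mul_sub (by rwa [uIcc_of_le zero_le_one] at hu))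
  have hderiv : ∀ u ∈ uIcc (0 : ℝ) 1, HasDerivAt (fun u : ℝ => log (a + u * (a' - a)))
      ((a' - a) / (a + u * (a' - a))) u := fun u hu =>
    (hasDerivAt_add_mul_sub u).clog_real (Or.inl (hre u hu))
  have hcont : ContinuousOn (fun u : ℝ => (a' - a) / (a + u * (a' - a))) (uIcc 0 1) :=
    continuousOn_const.div (by fun_prop) fun u hu h => by simpa [h] using hre u hu
  rw [intervalIntegral.integral_eq_sub_of_hasDerivAt hderiv hcont.intervalIntegrable]
  simp

lemma continuous_frullaniKernel : Continuous (frullaniKernel a a') := by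
  unfold frullaniKernel; fun_prop

lemma integrable_frullaniKernel (ha : 0 < a.re) (ha' : 0 < a'.re) :
    Integrable (frullaniKernel a a')
      ((volume.restrict (Ioi 0)).prod (volume.restrict (Ioc (0 : ℝ) 1))) := by
  set m := min a.re a'.re
  have hbound : Integrable (fun z : ℝ × ℝ => ‖a' - a‖ * Real.exp (-m * z.1) * 1)
      ((volume.restrict (Ioi 0)).prod (volume.restrict (Ioc (0 : ℝ) 1))) :=
    ((exp_neg_integrableOn_Ioi 0 (lt_min ha ha')).const_mul _).mul_prod
      ((integrableOn_const_iff).mpr (Or.inr (by simp)))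
  refine hbound.mono' continuous_frullaniKernel.aestronglyMeasurable ?_
  rw [Measure.prod_restrict]
  filter_upwards [ae_restrict_mem (measurableSet_Ioi.prod measurableSet_Ioc)] with z ⟨ht, hu⟩
  have hre := min_re_le_re_add_mul_sub (a := a) (a' := a') (Ioc_subset_Icc_self hu)
  simp only [frullaniKernel, norm_mul, norm_exp, mul_one]
  gcongr
  simp only [neg_mul, neg_re, mul_re, ofReal_re, ofReal_im, mul_zero, sub_zero, neg_le_neg_iff]
  exact mul_le_mul_of_nonneg_right hre (le_of_lt ht)

lemma integral_frullaniKernel_Ioc {t : ℝ} (ht : t ≠ 0) :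
    ∫ u in Ioc (0 : ℝ) 1, frullaniKernel a a' (t, u) = (cexp (-a * t) - cexp (-a' * t)) / t := by
  rw [← intervalIntegral.integral_of_le zero_le_one, ← integral_mul_cexp_segment ht]
  rfl

lemma integral_frullaniKernel_Ioi (ha : 0 < a.re) (ha' : 0 < a'.re) {u : ℝ}
    (hu : u ∈ Icc (0 : ℝ) 1) :
    ∫ t in Ioi 0, frullaniKernel a a' (t, u) = (a' - a) / (a + u * (a' - a)) := by
  have hre : (-(a + u * (a' - a))).re < 0 :=
    neg_neg_of_pos ((lt_min ha ha').trans_le (min_re_le_re_add_mul_sub hu))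
  simp only [frullaniKernel]
  rw [integral_const_mul, integral_exp_mul_complex_Ioi hre]
  simp only [ofReal_zero, mul_zero, Complex.exp_zero, neg_div_neg_eq, mul_one_div]

lemma integral_frullaniKernel_Ioc_ae_eq :
    (fun t => ∫ u in Ioc (0 : ℝ) 1, frullaniKernel a a' (t, u))
      =ᵐ[volume.restrict (Ioi 0)] fun t : ℝ => (cexp (-a * t) - cexp (-a' * t)) / t := by
  filter_upwards [ae_restrict_mem measurableSet_Ioi] with t ht
  exact integral_frullaniKernel_Ioc (ne_of_gt ht)

lemma integrableOn_cexp_sub_cexp_div (ha : 0 < a.re) (ha' : 0 < a'.re) :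
    IntegrableOn (fun t : ℝ => (cexp (-a * t) - cexp (-a' * t)) / t) (Ioi 0) :=
  (integrable_frullaniKernel ha ha').integral_prod_left.congr integral_frullaniKernel_Ioc_ae_eq

lemma integral_cexp_sub_cexp_div (ha : 0 < a.re) (ha' : 0 < a'.re) :
    ∫ t : ℝ in Ioi 0, (cexp (-a * t) - cexp (-a' * t)) / t = log a' - log a := calc
  _ = ∫ t in Ioi 0, ∫ u in Ioc (0 : ℝ) 1, frullaniKernel a a' (t, u) :=
      (integral_congr_ae integral_frullaniKernel_Ioc_ae_eq).symm
  _ = ∫ u in Ioc (0 : ℝ) 1, ∫ t in Ioi 0, frullaniKernel a a' (t, u) :=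
      integral_integral_swap (integrable_frullaniKernel ha ha')
  _ = ∫ u in Ioc (0 : ℝ) 1, (a' - a) / (a + u * (a' - a)) :=
      setIntegral_congr_fun measurableSet_Ioc fun u hu =>
        integral_frullaniKernel_Ioi ha ha' (Ioc_subset_Icc_self hu)
  _ = log a' - log a := by
      rw [← intervalIntegral.integral_of_le zero_le_one, integral_div_segment_eq_log_sub ha ha']

end

lemma cos_sub_cos_mul_cexp_div (p : ℂ) (b c t : ℝ) :
    (cos (b * t) - cos (c * t)) * cexp (-p * t) / t
      = 2⁻¹ * ((cexp (-(p - I * b) * t) - cexp (-(p - I * c) * t)) / t)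
        + 2⁻¹ * ((cexp (-(p + I * b) * t) - cexp (-(p + I * c) * t)) / t) := by
  have hsplit : ∀ s : ℂ, cexp (-(p + s) * t) = cexp (-(s * t)) * cexp (-p * t) := fun s => by
    rw [← Complex.exp_add]; ring_nf
  rw [sub_eq_add_neg p (I * b), sub_eq_add_neg p (I * c), hsplit, hsplit, hsplit, hsplit,
    Complex.cos, Complex.cos]
  ring_nf

/-- Cosine Frullani integral with complex damping: for `p ∈ ℂ` with `Re p > 0` and real
`b, c`, the function `t ↦ (cos(b t) - cos(c t)) exp(-p t)/t` is integrable on `(0, ∞)` and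
`∫_0^∞ (cos(b t) - cos(c t)) exp(-p t)/t dt
   = (1/2)(Log(p + i c) + Log(p - i c) - Log(p + i b) - Log(p - i b))`,
with `Log` the principal complex logarithm. -/
theorem frullani_cos_integral (p : ℂ) (hp : 0 < p.re) (b c : ℝ) :
    MeasureTheory.IntegrableOn
      (fun t : ℝ =>
        (Complex.cos (b * t) - Complex.cos (c * t)) * Complex.exp (-p * t) / t)
      (Set.Ioi 0) ∧
    ∫ t : ℝ in Set.Ioi 0,
        (Complex.cos (b * t) - Complex.cos (c * t)) * Complex.exp (-p * t) / t
      = (1 / 2) * (Complex.log (p + Complex.I * c) + Complex.log (p - Complex.I * c)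
          - Complex.log (p + Complex.I * b) - Complex.log (p - Complex.I * b)) := by
  have hre : ∀ x : ℝ, 0 < (p - I * x).re ∧ 0 < (p + I * x).re := fun x => by simp [hp]
  have hint₁ := integrableOn_cexp_sub_cexp_div (hre b).1 (hre c).1
  have hint₂ := integrableOn_cexp_sub_cexp_div (hre b).2 (hre c).2
  simp only [cos_sub_cos_mul_cexp_div]
  refine ⟨(hint₁.const_mul _).add (hint₂.const_mul _), ?_⟩
  rw [integral_add (hint₁.const_mul _) (hint₂.const_mul _), integral_const_mul, integral_const_mul,
    integral_cexp_sub_cexp_div (hre b).1 (hre c).1, integral_cexp_sub_cexp_div (hre b).2 (hre c).2]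
  ring
end

section
/- Regularized Mellin evaluation of the boson contraction (the paper's key formula rendered via the Hurwitz zeta function): for all real η > 0 and x > 0 with η·x < 1, the function s ↦ Γ(s) η^s ζ(s, ηx) − (1/2 − ηx)/s, defined for complex s ≠ 0 in a punctured neighborhood of 0, tends as s → 0 (s ≠ 0) to log Γ(ηx) + (ηx − 1/2)(γ_EM − log η) − (1/2) log(2π), where γ_EM is the Euler–Mascheroni constant. (Since ∫_0^∞ t^{s−1} e^{−xt}/(1 − e^{−t/η}) dt = Γ(s) η^s ζ(s, ηx) for Re s > 1, this is precisely the finite part at s = 0 asserted by the regularized formula ∫_C (ln(−λ)/(2πiλ)) e^{−xλ}/(1 − e^{−λ/η}) dλ = ln Γ(ηx) + (ηx − 1/2)(γ − ln η) − (1/2) ln 2π.) -/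
/-!
Since `Γ(s) = Γ(s + 1) / s`, the function is the difference quotient at `0` of
`Γ(s + 1) η^s ζ(s, a)` (with `a = ηx`), so its limit is `(log η - γ) ζ(0, a) + ∂ₛζ(0, a)`,
using `Γ'(1) = -γ`. It remains to show `ζ(0, a) = 1/2 - a` and Lerch's formula
`∂ₛζ(0, a) = log Γ(a) - log(2π)/2`. Both follow from the Euler–Maclaurin continuation
`ζ(s, a) = a^{-s}/2 + a^{1-s}/(s - 1) + ∑ₙ Eₙ(s)`, where `Eₙ(s)` is the error of the trapezoid
rule for `u ↦ u^{-s}` on `[n + a, n + a + 1]`. Since `|Eₙ(s)| ≤ |s| |s + 1| (n + a)^{-re s - 2}`,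
the series is holomorphic for `re s > -1`, `s ≠ 1`, agrees with `ζ(s, a)` by analytic
continuation, and can be differentiated termwise at `0`. The derivatives `Eₙ'(0)` telescope, and their
partial sums converge by Stirling's formula together with Gauss's product for `log Γ(a)`.
-/

open HurwitzZeta Filter Topology Set

theorem norm_trapezoid_sub_le {E : Type*} [NormedAddCommGroup E] [NormedSpace ℝ E]
    {F f f' f'' : ℝ → E} {a b M : ℝ} (hab : a ≤ b)
    (hF : ∀ x ∈ Icc a b, HasDerivAt F (f x) x) (hf : ∀ x ∈ Icc a b, HasDerivAt f (f' x) x)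
    (hf' : ∀ x ∈ Icc a b, HasDerivAt f' (f'' x) x) (hM : ∀ x ∈ Icc a b, ‖f'' x‖ ≤ M) :
    ‖((b - a) / 2) • (f a + f b) - (F b - F a)‖ ≤ M * (b - a) ^ 3 / 2 := by
  have hM0 : 0 ≤ M := (norm_nonneg _).trans (hM a (left_mem_Icc.2 hab))
  -- `ψ` is the trapezoid error on `[a, u]`, and `χ = ψ'`; both vanish at `a`.
  set χ : ℝ → E := fun u => (1 / 2 : ℝ) • (f a - f u) + ((u - a) / 2) • f' u
  set ψ : ℝ → E := fun u => ((u - a) / 2) • (f a + f u) - (F u - F a)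
  have hχ' : ∀ u ∈ Icc a b, HasDerivAt χ (((u - a) / 2) • f'' u) u := fun u hu => by
    have := (((hasDerivAt_const u (f a)).sub (hf u hu)).const_smul (1 / 2 : ℝ)).add
      ((((hasDerivAt_id u).sub_const a).div_const 2).smul (hf' u hu))
    refine this.congr_deriv ?_
    simp only [id]
    module
  have hψ' : ∀ u ∈ Icc a b, HasDerivAt ψ (χ u) u := fun u hu => by
    have := ((((hasDerivAt_id u).sub_const a).div_const 2).smul
      ((hasDerivAt_const u (f a)).add (hf u hu))).sub ((hF u hu).sub_const (F a))
    refine this.congr_deriv ?_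
    simp only [χ, id, Pi.add_apply]
    module
  have hχ : ∀ u ∈ Icc a b, ‖χ u‖ ≤ M * (b - a) / 2 * (u - a) := by
    have := norm_image_sub_le_of_norm_deriv_le_segment'
      (fun u hu => (hχ' u hu).hasDerivWithinAt) (C := M * (b - a) / 2) fun u hu => by
        rw [norm_smul, Real.norm_of_nonneg (by linarith [hu.1])]
        have := hM u (Ico_subset_Icc_self hu)
        nlinarith [hu.1, hu.2, norm_nonneg (f'' u)]
    simpa [χ] using this
  have hψ := norm_image_sub_le_of_norm_deriv_le_segment'
    (fun u hu => (hψ' u hu).hasDerivWithinAt) (C := M * (b - a) ^ 2 / 2) (fun u hu => by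
      have := hχ u (Ico_subset_Icc_self hu)
      have : M * (b - a) / 2 * (u - a) ≤ M * (b - a) / 2 * (b - a) :=
        mul_le_mul_of_nonneg_left (by linarith [hu.2]) (by nlinarith)
      nlinarith) b (right_mem_Icc.2 hab)
  simp only [ψ, sub_self, zero_div, zero_smul, sub_zero] at hψ
  linarith

theorem hasDerivAt_ofReal_cpow_of_pos {x : ℝ} (hx : 0 < x) (r : ℂ) :
    HasDerivAt (fun y : ℝ => (y : ℂ) ^ r) (r * (x : ℂ) ^ (r - 1)) x :=
  (Complex.hasStrictDerivAt_cpow_const (Complex.ofReal_mem_slitPlane.2 hx)).hasDerivAt.comp_ofReal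

theorem hasDerivAt_ofReal_cpow_sub_zero {x : ℝ} (hx : 0 < x) (w : ℂ) :
    HasDerivAt (fun s : ℂ => (x : ℂ) ^ (w - s)) (-((x : ℂ) ^ w * Real.log x)) 0 := by
  have := ((hasDerivAt_id (0 : ℂ)).const_sub w).const_cpow
    (c := (x : ℂ)) (Or.inl (Complex.ofReal_ne_zero.2 hx.ne'))
  simpa [Complex.ofReal_log hx.le] using this

theorem rpow_le_rpow_add_rpow {x p q r : ℝ} (hx : 0 < x) (hp : p ≤ r) (hq : r ≤ q) :
    x ^ r ≤ x ^ p + x ^ q := by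
  rcases le_total 1 x with h | h
  · exact (Real.rpow_le_rpow_of_exponent_le h hq).trans (le_add_of_nonneg_left (by positivity))
  · exact (Real.rpow_le_rpow_of_exponent_ge hx h hp).trans (le_add_of_nonneg_right (by positivity))

theorem summable_nat_add_rpow_neg {a p : ℝ} (ha : 0 < a) (hp : 1 < p) :
    Summable (fun n : ℕ => ((n : ℝ) + a) ^ (-p)) := by
  refine ((Real.summable_one_div_nat_add_rpow a p).2 hp).congr fun n => ?_
  rw [abs_of_pos (by positivity), one_div, Real.rpow_neg (by positivity)]

theorem tendsto_ofReal_nat_add_cpow_zero {a : ℝ} (ha : 0 < a) {w : ℂ} (hw : w.re < 0) :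
    Tendsto (fun N : ℕ => ((N + a : ℝ) : ℂ) ^ w) atTop (𝓝 0) := by
  rw [tendsto_zero_iff_norm_tendsto_zero]
  refine ((tendsto_rpow_neg_atTop (neg_pos.2 hw)).comp
    (tendsto_atTop_add_const_right _ a tendsto_natCast_atTop_atTop)).congr fun N => ?_
  rw [Function.comp_apply, neg_neg, Complex.norm_cpow_eq_rpow_re_of_pos (by positivity)]

theorem tendsto_stirling_sub_sum_log_nat_add {a : ℝ} (ha : 0 < a) :
    Tendsto (fun N : ℕ => (N + a - 1 / 2) * Real.log (N + a) - (N + a)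
        - ∑ n ∈ Finset.range N, Real.log (n + a)) atTop
      (𝓝 (Real.log (Real.Gamma a) - Real.log (2 * Real.pi) / 2)) := by
  have hstirling : Tendsto (fun N : ℕ => Real.log (Stirling.stirlingSeq N)) atTop
      (𝓝 (Real.log Real.pi / 2)) := by
    have := ((Real.continuousAt_log (by positivity)).tendsto).comp
      Stirling.tendsto_stirlingSeq_sqrt_pi
    rwa [Real.log_sqrt Real.pi_pos.le] at this
  have hlog : Tendsto (fun N : ℕ => Real.log (1 + a / N)) atTop (𝓝 0) := by
    have := ((Real.continuousAt_log one_ne_zero).tendsto).comp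
      (by simpa using (tendsto_const_div_atTop_nhds_zero_nat a).const_add 1)
    simpa [Function.comp_def] using this
  have hmul : Tendsto (fun N : ℕ => (N : ℝ) * Real.log (1 + a / N)) atTop (𝓝 a) :=
    (Real.tendsto_mul_log_one_add_div_atTop a).comp tendsto_natCast_atTop_atTop
  -- Gauss's product for `log Γ(a)` minus Stirling's formula for `log N!` leaves
  -- `(N + a + 1/2) log (1 + a/N) → a`.
  have hlim := (((Real.BohrMollerup.tendsto_log_gamma ha).sub hstirling).add
    (hmul.add (hlog.const_mul (a + 1 / 2)))).sub_const (a + Real.log 2 / 2)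
  rw [Real.log_mul two_ne_zero Real.pi_pos.ne']
  convert hlim.congr' ?_ using 2
  · ring
  filter_upwards [eventually_gt_atTop 0] with N hN
  have hN : (0 : ℝ) < N := Nat.cast_pos.2 hN
  have hNa : (0 : ℝ) < N + a := by positivity
  rw [Real.BohrMollerup.logGammaSeq, Stirling.log_stirlingSeq_formula,
    Finset.sum_range_succ, Real.log_mul two_ne_zero hN.ne',
    Real.log_div hN.ne' (Real.exp_ne_zero 1), Real.log_exp,
    show 1 + a / N = (N + a) / N by field_simp, Real.log_div hNa.ne' hN.ne']
  simp only [add_comm a]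
  ring

/-- The error of the trapezoid rule for `u ↦ u ^ (-s)` on `[c, c + 1]`; the value at `s = 1`,
where the formula divides by `1 - s = 0`, is junk. -/
noncomputable def trapezoidDefect (c : ℝ) (s : ℂ) : ℂ :=
  ((c : ℂ) ^ (-s) + ((c : ℂ) + 1) ^ (-s)) / 2
    - (((c : ℂ) + 1) ^ (1 - s) - (c : ℂ) ^ (1 - s)) / (1 - s)

theorem trapezoidDefect_zero (c : ℝ) : trapezoidDefect c 0 = 0 := by
  simp [trapezoidDefect]

theorem differentiableAt_trapezoidDefect {c : ℝ} (hc : 0 < c) {s : ℂ} (hs : s ≠ 1) :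
    DifferentiableAt ℂ (trapezoidDefect c) s := by
  have hc0 : (c : ℂ) ≠ 0 := Complex.ofReal_ne_zero.2 hc.ne'
  have hc1 : (c : ℂ) + 1 ≠ 0 := by exact_mod_cast (by linarith : c + 1 ≠ 0)
  unfold trapezoidDefect
  fun_prop (disch := first | exact Or.inl hc0 | exact Or.inl hc1 | exact sub_ne_zero.2 hs.symm)

theorem norm_trapezoidDefect_le {c : ℝ} (hc : 0 < c) {s : ℂ} (hs : s ≠ 1) (hσ : -2 ≤ s.re) :
    ‖trapezoidDefect c s‖ ≤ ‖s‖ * ‖s + 1‖ * c ^ (-s.re - 2) / 2 := by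
  have hs' : 1 - s ≠ 0 := sub_ne_zero.2 hs.symm
  have htrap := norm_trapezoid_sub_le (le_add_of_nonneg_right zero_le_one)
    (F := fun u : ℝ => (u : ℂ) ^ (1 - s) / (1 - s)) (f := fun u : ℝ => (u : ℂ) ^ (-s))
    (f' := fun u : ℝ => -s * (u : ℂ) ^ (-s - 1))
    (f'' := fun u : ℝ => -s * ((-s - 1) * (u : ℂ) ^ (-s - 1 - 1)))
    (M := ‖s‖ * ‖s + 1‖ * c ^ (-s.re - 2))
    (fun u hu => by
      have := (hasDerivAt_ofReal_cpow_of_pos (hc.trans_le hu.1) (1 - s)).div_const (1 - s)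
      rwa [mul_div_cancel_left₀ _ hs', sub_sub_cancel_left] at this)
    (fun u hu => hasDerivAt_ofReal_cpow_of_pos (hc.trans_le hu.1) (-s))
    (fun u hu => (hasDerivAt_ofReal_cpow_of_pos (hc.trans_le hu.1) (-s - 1)).const_mul (-s))
    (fun u hu => by
      have hu0 : 0 < u := hc.trans_le hu.1
      rw [norm_mul, norm_mul, Complex.norm_cpow_eq_rpow_re_of_pos hu0, norm_neg,
        show -s - 1 = -(s + 1) by ring, norm_neg, mul_assoc]
      gcongr
      have hre : (-(s + 1) - 1).re = -s.re - 2 := by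
        simp only [Complex.sub_re, Complex.neg_re, Complex.add_re, Complex.one_re]
        ring
      rw [hre]
      exact Real.rpow_le_rpow_of_nonpos hc hu.1 (by linarith))
  have hdef : trapezoidDefect c s
      = ((c + 1 - c) / 2 : ℝ) • ((c : ℂ) ^ (-s) + ((c + 1 : ℝ) : ℂ) ^ (-s))
        - (((c + 1 : ℝ) : ℂ) ^ (1 - s) / (1 - s) - (c : ℂ) ^ (1 - s) / (1 - s)) := by
    rw [trapezoidDefect, Complex.real_smul]
    push_cast
    ring
  rw [hdef]
  simpa using htrap

theorem summable_trapezoidDefect {a : ℝ} (ha : 0 < a) {s : ℂ} (hs : s ≠ 1) (hσ : -1 < s.re) :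
    Summable (fun n : ℕ => trapezoidDefect (n + a) s) := by
  refine Summable.of_norm_bounded
    ((summable_nat_add_rpow_neg ha (by linarith : 1 < s.re + 2)).mul_left (‖s‖ * ‖s + 1‖ / 2))
    fun n => ?_
  have := norm_trapezoidDefect_le (c := n + a) (by positivity) hs (by linarith)
  rwa [neg_add', div_mul_eq_mul_div]

theorem sum_range_trapezoidDefect (a : ℝ) (s : ℂ) (N : ℕ) :
    ∑ n ∈ Finset.range N, trapezoidDefect (n + a) s
      = ∑ n ∈ Finset.range N, ((n + a : ℝ) : ℂ) ^ (-s)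
        + (((N + a : ℝ) : ℂ) ^ (-s) - (a : ℂ) ^ (-s)) / 2
        - (((N + a : ℝ) : ℂ) ^ (1 - s) - (a : ℂ) ^ (1 - s)) / (1 - s) := by
  have hsucc : ∀ n : ℕ, ((n + a : ℝ) : ℂ) + 1 = (((n + 1 : ℕ) + a : ℝ) : ℂ) := fun n => by
    push_cast; ring
  have h := congrArg₂ (fun x y : ℂ => x / 2 - y / (1 - s))
    (Finset.sum_range_sub (fun n : ℕ => ((n + a : ℝ) : ℂ) ^ (-s)) N)
    (Finset.sum_range_sub (fun n : ℕ => ((n + a : ℝ) : ℂ) ^ (1 - s)) N)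
  simp only [Finset.sum_div, ← Finset.sum_sub_distrib, CharP.cast_eq_zero, zero_add] at h
  simp only [trapezoidDefect, hsucc]
  rw [add_sub_assoc, ← h, ← Finset.sum_add_distrib]
  exact Finset.sum_congr rfl fun n _ => by ring

theorem hasDerivAt_trapezoidDefect_zero {c : ℝ} (hc : 0 < c) :
    HasDerivAt (trapezoidDefect c)
      (((c + 1) * Real.log (c + 1) - c * Real.log c - 1
        - (Real.log c + Real.log (c + 1)) / 2 : ℝ) : ℂ) 0 := by
  have hc1 : 0 < c + 1 := by linarith
  have h := (((hasDerivAt_ofReal_cpow_sub_zero hc 0).add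
      (hasDerivAt_ofReal_cpow_sub_zero hc1 0)).div_const 2).sub
    (((hasDerivAt_ofReal_cpow_sub_zero hc1 1).sub (hasDerivAt_ofReal_cpow_sub_zero hc 1)).div
      ((hasDerivAt_id (0 : ℂ)).const_sub 1) (by simp))
  simp only [zero_sub] at h
  refine (h.congr_deriv ?_).congr_of_eventuallyEq (Eventually.of_forall fun s => ?_)
  · push_cast
    simp only [Complex.cpow_zero, Complex.cpow_one, sub_neg_eq_add, id_eq, sub_zero, Pi.sub_apply]
    ring
  · simp [trapezoidDefect]

theorem tendsto_sum_deriv_trapezoidDefect_zero {a : ℝ} (ha : 0 < a) :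
    Tendsto (fun N : ℕ => ∑ n ∈ Finset.range N, ((n + a + 1) * Real.log (n + a + 1)
        - (n + a) * Real.log (n + a) - 1 - (Real.log (n + a) + Real.log (n + a + 1)) / 2)) atTop
      (𝓝 (Real.log (Real.Gamma a) - Real.log (2 * Real.pi) / 2
        + a - a * Real.log a + Real.log a / 2)) := by
  refine (((tendsto_stirling_sub_sum_log_nat_add ha).add_const a).sub_const (a * Real.log a)
    |>.add_const (Real.log a / 2)).congr fun N => ?_
  have hsucc : ∀ n : ℕ, (n : ℝ) + a + 1 = ((n + 1 : ℕ) : ℝ) + a := fun n => by push_cast; ring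
  have h := congrArg₂ (fun x y : ℝ => x - y / 2)
    (Finset.sum_range_sub (fun n : ℕ => (n + a) * Real.log (n + a)) N)
    (Finset.sum_range_sub (fun n : ℕ => Real.log (n + a)) N)
  simp only [Finset.sum_div, ← Finset.sum_sub_distrib, CharP.cast_eq_zero, zero_add] at h
  simp only [hsucc]
  have hsplit : ∀ n ∈ Finset.range N, ((n + 1 : ℕ) + a) * Real.log ((n + 1 : ℕ) + a)
      - (n + a) * Real.log (n + a) - 1 - (Real.log (n + a) + Real.log ((n + 1 : ℕ) + a)) / 2
      = ((n + 1 : ℕ) + a) * Real.log ((n + 1 : ℕ) + a) - (n + a) * Real.log (n + a)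
        - (Real.log ((n + 1 : ℕ) + a) - Real.log (n + a)) / 2 - (Real.log (n + a) + 1) :=
    fun n _ => by ring
  rw [Finset.sum_congr rfl hsplit, Finset.sum_sub_distrib, h, Finset.sum_add_distrib]
  simp only [Finset.sum_const, Finset.card_range, nsmul_eq_mul, mul_one]
  ring

noncomputable def eulerMaclaurinHurwitzZeta (a : ℝ) (s : ℂ) : ℂ :=
  (a : ℂ) ^ (-s) / 2 + (a : ℂ) ^ (1 - s) / (s - 1) + ∑' n : ℕ, trapezoidDefect (n + a) s

theorem eulerMaclaurinHurwitzZeta_zero (a : ℝ) : eulerMaclaurinHurwitzZeta a 0 = 1 / 2 - a := by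
  norm_num [eulerMaclaurinHurwitzZeta, trapezoidDefect_zero]
  ring

theorem eulerMaclaurinHurwitzZeta_eq_hurwitzZeta {a : ℝ} (ha : 0 < a) (ha1 : a ≤ 1) {s : ℂ}
    (hs : 1 < s.re) : eulerMaclaurinHurwitzZeta a s = hurwitzZeta a s := by
  have hs1 : s ≠ 1 := by rintro rfl; simp at hs
  have hzeta : Tendsto (fun N => ∑ n ∈ Finset.range N, ((n + a : ℝ) : ℂ) ^ (-s)) atTop
      (𝓝 (hurwitzZeta a s)) := by
    refine (hasSum_hurwitzZeta_of_one_lt_re ⟨ha.le, ha1⟩ hs).tendsto_sum_nat.congr fun N =>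
      Finset.sum_congr rfl fun n _ => ?_
    rw [Complex.cpow_neg, one_div]
    push_cast
    rfl
  have hlim := (hzeta.add
    (((tendsto_ofReal_nat_add_cpow_zero ha (w := -s) (by rw [Complex.neg_re]; linarith)).sub_const
      ((a : ℂ) ^ (-s))).div_const 2)).sub
    (((tendsto_ofReal_nat_add_cpow_zero ha (w := 1 - s)
      (by rw [Complex.sub_re, Complex.one_re]; linarith)).sub_const
      ((a : ℂ) ^ (1 - s))).div_const (1 - s))
  simp only [← sum_range_trapezoidDefect] at hlim
  rw [eulerMaclaurinHurwitzZeta,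
    tendsto_nhds_unique (summable_trapezoidDefect ha hs1 (by linarith)).hasSum.tendsto_sum_nat hlim]
  field_simp [sub_ne_zero.2 hs1, sub_ne_zero.2 hs1.symm]
  ring

/-- A convex open neighbourhood of `0` that avoids the pole `s = 1`, meets `1 < re s`, and on
which the terms of `eulerMaclaurinHurwitzZeta` have a summable majorant. -/
def eulerMaclaurinRegion : Set ℂ :=
  Metric.ball 0 4 ∩ {s | -(1 / 2 : ℝ) < s.re} ∩ {s | s.re - s.im < 1}

theorem isOpen_eulerMaclaurinRegion : IsOpen eulerMaclaurinRegion :=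
  (Metric.isOpen_ball.inter (isOpen_lt continuous_const Complex.continuous_re)).inter
    (isOpen_lt (Complex.continuous_re.sub Complex.continuous_im) continuous_const)

theorem convex_eulerMaclaurinRegion : Convex ℝ eulerMaclaurinRegion :=
  ((convex_ball 0 4).inter (convex_halfSpace_re_gt _)).inter
    (convex_halfSpace_lt (Complex.reLm - Complex.imLm).isLinear 1)

theorem zero_mem_eulerMaclaurinRegion : (0 : ℂ) ∈ eulerMaclaurinRegion := by
  norm_num [eulerMaclaurinRegion]

theorem one_notMem_eulerMaclaurinRegion : (1 : ℂ) ∉ eulerMaclaurinRegion := by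
  simp [eulerMaclaurinRegion]

theorem norm_trapezoidDefect_le_of_mem_eulerMaclaurinRegion {a : ℝ} (ha : 0 < a) (n : ℕ) {s : ℂ}
    (hs : s ∈ eulerMaclaurinRegion) :
    ‖trapezoidDefect (n + a) s‖
      ≤ 10 * (((n : ℝ) + a) ^ (-6 : ℝ) + ((n : ℝ) + a) ^ (-(3 / 2) : ℝ)) := by
  have hs1 : s ≠ 1 := by rintro rfl; exact one_notMem_eulerMaclaurinRegion hs
  obtain ⟨⟨hball, hre : -(1 / 2 : ℝ) < s.re⟩, -⟩ := hs
  rw [mem_ball_zero_iff] at hball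
  have hre' := Complex.re_le_norm s
  have hs1' : ‖s + 1‖ ≤ 5 := (norm_add_le _ _).trans (by rw [norm_one]; linarith)
  calc ‖trapezoidDefect (n + a) s‖ ≤ ‖s‖ * ‖s + 1‖ * ((n : ℝ) + a) ^ (-s.re - 2) / 2 :=
        norm_trapezoidDefect_le (by positivity) hs1 (by linarith)
    _ ≤ 4 * 5 * (((n : ℝ) + a) ^ (-6 : ℝ) + ((n : ℝ) + a) ^ (-(3 / 2) : ℝ)) / 2 := by
        gcongr
        exact rpow_le_rpow_add_rpow (by positivity) (by linarith) (by linarith)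
    _ = _ := by ring

theorem summable_eulerMaclaurinMajorant {a : ℝ} (ha : 0 < a) :
    Summable fun n : ℕ => 10 * (((n : ℝ) + a) ^ (-6 : ℝ) + ((n : ℝ) + a) ^ (-(3 / 2) : ℝ)) :=
  ((summable_nat_add_rpow_neg ha (by norm_num)).add
    (summable_nat_add_rpow_neg ha (by norm_num))).mul_left 10

theorem differentiableOn_trapezoidDefect {c : ℝ} (hc : 0 < c) :
    DifferentiableOn ℂ (trapezoidDefect c) eulerMaclaurinRegion := fun _ hs =>
  (differentiableAt_trapezoidDefect hc
    (ne_of_mem_of_not_mem hs one_notMem_eulerMaclaurinRegion)).differentiableWithinAt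

theorem differentiableOn_tsum_trapezoidDefect {a : ℝ} (ha : 0 < a) :
    DifferentiableOn ℂ (fun s => ∑' n : ℕ, trapezoidDefect (n + a) s) eulerMaclaurinRegion :=
  Complex.differentiableOn_tsum_of_summable_norm (summable_eulerMaclaurinMajorant ha)
    (fun n => differentiableOn_trapezoidDefect (by positivity)) isOpen_eulerMaclaurinRegion
    fun n _ hs => norm_trapezoidDefect_le_of_mem_eulerMaclaurinRegion ha n hs

theorem differentiableOn_eulerMaclaurinHurwitzZeta {a : ℝ} (ha : 0 < a) :
    DifferentiableOn ℂ (eulerMaclaurinHurwitzZeta a) eulerMaclaurinRegion := by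
  have ha0 : (a : ℂ) ≠ 0 := Complex.ofReal_ne_zero.2 ha.ne'
  refine DifferentiableOn.add (fun s hs => ?_) (differentiableOn_tsum_trapezoidDefect ha)
  have hs1 : s - 1 ≠ 0 := sub_ne_zero.2 (ne_of_mem_of_not_mem hs one_notMem_eulerMaclaurinRegion)
  apply DifferentiableAt.differentiableWithinAt
  fun_prop (disch := first | exact Or.inl ha0 | exact hs1)

theorem eqOn_eulerMaclaurinHurwitzZeta {a : ℝ} (ha : 0 < a) (ha1 : a ≤ 1) :
    EqOn (eulerMaclaurinHurwitzZeta a) (hurwitzZeta a) eulerMaclaurinRegion := by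
  have hζ : DifferentiableOn ℂ (hurwitzZeta a) eulerMaclaurinRegion := fun s hs =>
    (differentiableAt_hurwitzZeta _
      (ne_of_mem_of_not_mem hs one_notMem_eulerMaclaurinRegion)).differentiableWithinAt
  refine ((differentiableOn_eulerMaclaurinHurwitzZeta ha).analyticOnNhd
    isOpen_eulerMaclaurinRegion).eqOn_of_preconnected_of_eventuallyEq
    (hζ.analyticOnNhd isOpen_eulerMaclaurinRegion) convex_eulerMaclaurinRegion.isPreconnected
    (z₀ := 3 / 2 + Complex.I) ?_ ?_
  · refine ⟨⟨?_, by norm_num⟩, by norm_num⟩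
    rw [mem_ball_zero_iff]
    refine (Complex.norm_le_abs_re_add_abs_im _).trans_lt ?_
    norm_num
  · filter_upwards [(isOpen_lt continuous_const Complex.continuous_re).mem_nhds
      (by norm_num : (1 : ℝ) < (3 / 2 + Complex.I).re)] with s hs
    exact eulerMaclaurinHurwitzZeta_eq_hurwitzZeta ha ha1 hs

theorem hasDerivAt_tsum_trapezoidDefect_zero {a : ℝ} (ha : 0 < a) :
    HasDerivAt (fun s => ∑' n : ℕ, trapezoidDefect (n + a) s)
      ((Real.log (Real.Gamma a) - Real.log (2 * Real.pi) / 2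
        + a - a * Real.log a + Real.log a / 2 : ℝ) : ℂ) 0 := by
  have hsum := Complex.hasSum_deriv_of_summable_norm (summable_eulerMaclaurinMajorant ha)
    (fun n => differentiableOn_trapezoidDefect (by positivity)) isOpen_eulerMaclaurinRegion
    (fun n s hs => norm_trapezoidDefect_le_of_mem_eulerMaclaurinRegion ha n hs)
    zero_mem_eulerMaclaurinRegion
  simp only [fun n : ℕ => (hasDerivAt_trapezoidDefect_zero (c := n + a) (by positivity)).deriv]
    at hsum
  have hderiv := tendsto_nhds_unique hsum.tendsto_sum_nat
    ((Complex.continuous_ofReal.tendsto _).comp (tendsto_sum_deriv_trapezoidDefect_zero ha)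
      |>.congr fun N => by simp)
  rw [← hderiv]
  exact ((differentiableOn_tsum_trapezoidDefect ha 0 zero_mem_eulerMaclaurinRegion).differentiableAt
    (isOpen_eulerMaclaurinRegion.mem_nhds zero_mem_eulerMaclaurinRegion)).hasDerivAt

theorem hasDerivAt_eulerMaclaurinHurwitzZeta_zero {a : ℝ} (ha : 0 < a) :
    HasDerivAt (eulerMaclaurinHurwitzZeta a)
      ((Real.log (Real.Gamma a) - Real.log (2 * Real.pi) / 2 : ℝ) : ℂ) 0 := by
  have h := (((hasDerivAt_ofReal_cpow_sub_zero ha 0).div_const 2).add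
    ((hasDerivAt_ofReal_cpow_sub_zero ha 1).div
      ((hasDerivAt_id (0 : ℂ)).sub_const 1) (by simp))).add
    (hasDerivAt_tsum_trapezoidDefect_zero ha)
  simp only [zero_sub] at h
  refine h.congr_deriv ?_
  push_cast
  simp only [Complex.cpow_zero, Complex.cpow_one, id_eq, zero_sub, sub_zero]
  ring

theorem hurwitzZeta_at_zero {a : ℝ} (ha : 0 < a) (ha1 : a ≤ 1) :
    hurwitzZeta a 0 = 1 / 2 - a := by
  rw [← eqOn_eulerMaclaurinHurwitzZeta ha ha1 zero_mem_eulerMaclaurinRegion,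
    eulerMaclaurinHurwitzZeta_zero]

theorem hasDerivAt_hurwitzZeta_zero {a : ℝ} (ha : 0 < a) (ha1 : a ≤ 1) :
    HasDerivAt (hurwitzZeta a) ((Real.log (Real.Gamma a) - Real.log (2 * Real.pi) / 2 : ℝ) : ℂ) 0 :=
  (hasDerivAt_eulerMaclaurinHurwitzZeta_zero ha).congr_of_eventuallyEq <|
    Filter.eventuallyEq_of_mem (isOpen_eulerMaclaurinRegion.mem_nhds zero_mem_eulerMaclaurinRegion)
      fun _ hs => (eqOn_eulerMaclaurinHurwitzZeta ha ha1 hs).symm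

theorem tendsto_Gamma_mul_exp_mul_sub_div {f : ℂ → ℂ} {d : ℂ} (hf : HasDerivAt f d 0) (L : ℂ) :
    Tendsto (fun s => Complex.Gamma s * Complex.exp (s * L) * f s - f 0 / s) (𝓝[≠] 0)
      (𝓝 (d + (L - Real.eulerMascheroniConstant) * f 0)) := by
  have hG : HasDerivAt (fun s => Complex.Gamma (s + 1)) (-Real.eulerMascheroniConstant) 0 :=
    HasDerivAt.comp_add_const 0 1 (by simpa using Complex.hasDerivAt_Gamma_one)
  have hE : HasDerivAt (fun s => Complex.exp (s * L)) L 0 := by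
    simpa using ((hasDerivAt_id (0 : ℂ)).mul_const L).cexp
  have hF : HasDerivAt (fun s => Complex.Gamma (s + 1) * Complex.exp (s * L) * f s)
      (d + (L - Real.eulerMascheroniConstant) * f 0) 0 := by
    refine ((hG.fun_mul hE).fun_mul hf).congr_deriv ?_
    simp only [zero_add, Complex.Gamma_one, zero_mul, Complex.exp_zero]
    ring
  refine (hasDerivAt_iff_tendsto_slope.1 hF).congr'
    (eventually_nhdsWithin_of_forall fun s (hs : s ≠ 0) => ?_)
  rw [slope_def_field, Complex.Gamma_add_one s hs]
  simp only [zero_add, Complex.Gamma_one, zero_mul, Complex.exp_zero, one_mul, sub_zero]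
  field_simp

/-- Regularized Mellin evaluation of the boson contraction: for real `η > 0`, `x > 0` with
`η·x < 1`, the function `s ↦ Γ(s) η^s ζ(s, ηx) - (1/2 - ηx)/s` tends, as `s → 0` along
nonzero `s`, to `log Γ(ηx) + (ηx - 1/2)(γ_EM - log η) - (1/2) log(2π)`. Here `ζ(s, a)` is
the Hurwitz zeta function, `η^s = exp(s · log η)` with `log η` real, and `γ_EM` is the
Euler–Mascheroni constant. This is the finite part at `s = 0` asserted by the regularized
formula `∫_C (ln(-λ)/(2πiλ)) e^{-xλ}/(1 - e^{-λ/η}) dλ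
  = ln Γ(ηx) + (ηx - 1/2)(γ - ln η) - (1/2) ln 2π`. -/
theorem regularized_mellin_boson_contraction (η x : ℝ) (hη : 0 < η) (hx : 0 < x)
    (hηx : η * x < 1) :
    Tendsto
      (fun s : ℂ =>
        Complex.Gamma s * Complex.exp (s * (Real.log η : ℂ))
            * hurwitzZeta (↑(η * x) : UnitAddCircle) s
          - ((1 / 2 : ℂ) - (η * x : ℝ)) / s)
      (𝓝[≠] 0)
      (𝓝 ((Real.log (Real.Gamma (η * x))
          + (η * x - 1 / 2) * (Real.eulerMascheroniConstant - Real.log η)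
          - (1 / 2) * Real.log (2 * Real.pi) : ℝ) : ℂ)) := by
  have ha : 0 < η * x := mul_pos hη hx
  have h := tendsto_Gamma_mul_exp_mul_sub_div (hasDerivAt_hurwitzZeta_zero ha hηx.le) (Real.log η)
  rw [hurwitzZeta_at_zero ha hηx.le] at h
  convert h using 2
  push_cast
  ring
end
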